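/- arXiv:math/0105196 — 2 statements merged into one kernel-verified Lean document; each statement's English description precedes it below -/
import Mathlib

section
/- Let T = ℝ/λℤ with λ > 0 and μ = 1/λ. Fix x ∈ ℝ with μx ∉ ℤ, and let t : ℝ → ℂ be smooth and satisfy t(y+μ) = t(y)·e^{2iπμx} for all y ∈ ℝ. Then there exists a smooth function s : ℝ → ℂ with the same automorphy property, s(y+μ) = s(y)·e^{2iπμx}, such that s'(y) = t(y); namely s(y) = ∫₀^y t(u)du + c with c(1 − e^{2iπμx}) = −∫₀^μ t(u)du. Conversely, if μx ∈ ℤ (so e^{2iπμx} = 1), such a primitive s exists if and only if ∫₀^μ t(u)du = 0. -/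
open Complex Real intervalIntegral


lemma analytic_primitive {t s : ℝ → ℂ} (ht : ContDiff ℝ (⊤ : ℕ∞) t)
    (hs : ∀ y : ℝ, HasDerivAt s (t y) y) : ContDiff ℝ (⊤ : ℕ∞) s := by
  have hd : Differentiable ℝ s := fun y => (hs y).differentiableAt
  have hderiv : deriv s = t := funext fun y => (hs y).deriv
  exact contDiff_infty_iff_deriv.2 ⟨hd, hderiv ▸ ht⟩

lemma stmt8_key (μ : ℝ) (t : ℝ → ℂ) (e : ℂ) (ht : ContDiff ℝ (⊤ : ℕ∞) t)
    (haut : ∀ y : ℝ, t (y + μ) = t y * e) (c : ℂ)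
    (hc : c * (1 - e) = -(∫ u in (0:ℝ)..μ, t u)) :
    ContDiff ℝ (⊤ : ℕ∞) (fun y => (∫ u in (0:ℝ)..y, t u) + c) ∧
    (∀ y : ℝ, (∫ u in (0:ℝ)..(y+μ), t u) + c = ((∫ u in (0:ℝ)..y, t u) + c) * e) ∧
    (∀ y : ℝ, deriv (fun y => (∫ u in (0:ℝ)..y, t u) + c) y = t y) := by
  have hcont := ht.continuous
  have hint : ∀ a b : ℝ, IntervalIntegrable t MeasureTheory.volume a b :=
    fun a b => hcont.intervalIntegrable a b
  have hderiv : ∀ y : ℝ, HasDerivAt (fun y => (∫ u in (0:ℝ)..y, t u) + c) (t y) y := by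
    intro y
    exact ((intervalIntegral.integral_hasDerivAt_right (hint 0 y)
      hcont.aestronglyMeasurable.stronglyMeasurableAtFilter hcont.continuousAt).add_const c)
  have hd : ∀ y, deriv (fun y => (∫ u in (0:ℝ)..y, t u) + c) y = t y :=
    fun y => (hderiv y).deriv
  refine ⟨?_, ?_, hd⟩
  · exact analytic_primitive ht hderiv
  · intro y
    have hsplit : (∫ u in (0:ℝ)..(y+μ), t u)
        = (∫ u in (0:ℝ)..μ, t u) + ∫ u in μ..(y+μ), t u :=
      (intervalIntegral.integral_add_adjacent_intervals (hint 0 μ) (hint μ (y+μ))).symm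
    have hshift : (∫ u in μ..(y+μ), t u) = (∫ u in (0:ℝ)..y, t u) * e := by
      have h1 : (∫ u in (0:ℝ)..y, t (u + μ)) = ∫ u in (0+μ)..(y+μ), t u :=
        intervalIntegral.integral_comp_add_right (fun u => t u) μ
      rw [zero_add] at h1
      rw [← h1]
      simp_rw [haut]
      rw [intervalIntegral.integral_mul_const]
    rw [hsplit, hshift]
    linear_combination hc

/-- on `T = ℝ/λℤ` with `μ = 1/λ`, let `t` be smooth with automorphy
`t(y+μ) = t(y)e^{2iπμx}`.  If `μx ∉ ℤ` then `t` has a smooth primitive `s` with the same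
automorphy, given by `s(y) = ∫₀^y t + c` with `c(1 − e^{2iπμx}) = −∫₀^μ t`.  Conversely, if
`μx ∈ ℤ`, such a primitive exists iff `∫₀^μ t = 0`. -/
theorem stmt_8 (lam : ℝ) (hlam : 0 < lam) (μ : ℝ) (hμ : μ = 1 / lam)
    (x : ℝ) (t : ℝ → ℂ) (ht : ContDiff ℝ (⊤ : ℕ∞) t)
    (haut : ∀ y : ℝ, t (y + μ) = t y * Complex.exp (2 * (π : ℂ) * Complex.I * (μ : ℂ) * (x : ℂ))) :
    ((∀ n : ℤ, μ * x ≠ (n : ℝ)) →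
      ∃ s : ℝ → ℂ, ContDiff ℝ (⊤ : ℕ∞) s ∧
        (∀ y : ℝ, s (y + μ) = s y * Complex.exp (2 * (π : ℂ) * Complex.I * (μ : ℂ) * (x : ℂ))) ∧
        (∀ y : ℝ, deriv s y = t y) ∧
        ∃ c : ℂ, (∀ y : ℝ, s y = (∫ u in (0:ℝ)..y, t u) + c) ∧
          c * (1 - Complex.exp (2 * (π : ℂ) * Complex.I * (μ : ℂ) * (x : ℂ))) =
            -(∫ u in (0:ℝ)..μ, t u)) ∧
    ((∃ n : ℤ, μ * x = (n : ℝ)) →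
      ((∃ s : ℝ → ℂ, ContDiff ℝ (⊤ : ℕ∞) s ∧
        (∀ y : ℝ, s (y + μ) = s y * Complex.exp (2 * (π : ℂ) * Complex.I * (μ : ℂ) * (x : ℂ))) ∧
        (∀ y : ℝ, deriv s y = t y)) ↔ (∫ u in (0:ℝ)..μ, t u) = 0)) := by
  set e : ℂ := Complex.exp (2 * (π : ℂ) * Complex.I * (μ : ℂ) * (x : ℂ)) with he
  constructor
  · intro hnot
    have hne : e ≠ 1 := by
      intro h1
      rw [he, Complex.exp_eq_one_iff] at h1
      obtain ⟨n, hn⟩ := h1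
      apply hnot n
      have hπ : (π : ℂ) ≠ 0 := by exact_mod_cast Real.pi_ne_zero
      have : ((μ * x : ℝ) : ℂ) = (n : ℂ) := by
        push_cast
        have h2 : (2 : ℂ) * π * Complex.I * (μ * x) = (n : ℂ) * (2 * π * Complex.I) := by
          rw [← hn]; ring
        have h3 : (2 : ℂ) * π * Complex.I ≠ 0 := by
          simp [hπ, Complex.I_ne_zero]
        have h4 : (2:ℂ) * π * Complex.I * (μ*x) = (2:ℂ) * π * Complex.I * n := by
          rw [h2]; ring
        exact mul_left_cancel₀ h3 h4
      exact_mod_cast this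
    set c : ℂ := -(∫ u in (0:ℝ)..μ, t u) / (1 - e) with hcdef
    have hc : c * (1 - e) = -(∫ u in (0:ℝ)..μ, t u) := by
      rw [hcdef, div_mul_cancel₀]
      exact sub_ne_zero.mpr (fun h => hne h.symm)
    obtain ⟨h1, h2, h3⟩ := stmt8_key μ t e ht haut c hc
    exact ⟨_, h1, h2, h3, c, fun y => rfl, hc⟩
  · rintro ⟨n, hn⟩
    have he1 : e = 1 := by
      rw [he]
      have : (2 : ℂ) * π * Complex.I * μ * x = n * (2 * π * Complex.I) := by
        have : ((μ * x : ℝ) : ℂ) = (n : ℂ) := by exact_mod_cast hn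
        push_cast at this
        rw [show (2 : ℂ) * π * Complex.I * μ * x = (μ*x) * (2 * π * Complex.I) by ring, this]
      rw [this, Complex.exp_int_mul_two_pi_mul_I]
    constructor
    · rintro ⟨s, hs, hsa, hsd⟩
      have : (∫ u in (0:ℝ)..μ, t u) = s μ - s 0 := by
        rw [intervalIntegral.integral_deriv_eq_sub' s (funext hsd)
          (fun y _ => (hs.differentiable (by simp)).differentiableAt) ht.continuous.continuousOn]
      rw [this]
      have := hsa 0
      rw [zero_add, he1, mul_one] at this
      rw [this, sub_self]
    · intro h0
      have hc : (0 : ℂ) * (1 - e) = -(∫ u in (0:ℝ)..μ, t u) := by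
        rw [h0]; ring
      obtain ⟨h1, h2, h3⟩ := stmt8_key μ t e ht haut 0 hc
      exact ⟨_, h1, h2, h3⟩
end

section
/- Let ε₁,…,ε_n : ℝⁿ → ℝ be smooth functions satisfying ∂ε_j/∂x^m = ∂ε_m/∂x^j and A₁,…,A_n smooth with ∂A_j/∂x^ℓ = ∂A_ℓ/∂x^j. Consider the complex 2-form on ℝ²ⁿ (with coordinates x^j, w^j and z^j = x^j + i w^j) given by F̂ = dÂ where Â = i Σ_j A_j(x)dx^j − 2iπ Σ_j ε_j(x)dw^j. Then the (2,0) and (0,2) Hodge components of F̂ with respect to the complex structure z^j = x^j + iw^j vanish, and F̂^{1,1} = π Σ_{k,j} (∂ε_j/∂x^k + ∂ε_k/∂x^j)/2 · dz^k ∧ dz̄^j = π Σ_{k,j} (∂ε_k/∂x^j) dz^k ∧ dz̄^j. -/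
open Complex Real

/-- The `(2,0)` Hodge component of a complex-valued 2-form `F` on `ℝⁿ×ℝⁿ` (tangent vectors
written as pairs `(u,u')`), with respect to the complex structure `J(u,u') = (−u',u)`
(i.e. `z^j = x^j + i w^j`), evaluated on `X = (u,u')`, `Y = (v,v')`. -/
noncomputable def hodge20 {n : ℕ}
    (F : (Fin n → ℝ) → (Fin n → ℝ) → (Fin n → ℝ) → (Fin n → ℝ) → ℂ)
    (u u' v v' : Fin n → ℝ) : ℂ :=
  (F u u' v v' - F (-u') u (-v') v
    - Complex.I * (F (-u') u v v' + F u u' (-v') v)) / 4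

/-- The `(0,2)` Hodge component, in the same setting. -/
noncomputable def hodge02 {n : ℕ}
    (F : (Fin n → ℝ) → (Fin n → ℝ) → (Fin n → ℝ) → (Fin n → ℝ) → ℂ)
    (u u' v v' : Fin n → ℝ) : ℂ :=
  (F u u' v v' - F (-u') u (-v') v
    + Complex.I * (F (-u') u v v' + F u u' (-v') v)) / 4

/-- The curvature 2-form `F̂ = dÂ` of `Â = i Σ_j A_j(x)dx^j − 2iπ Σ_j ε_j(x)dw^j`, evaluated
at the point `x` on the tangent vectors `X = (u,u')`, `Y = (v,v')`:
`F̂ = i Σ_{ℓ,j} ∂_ℓA_j dx^ℓ∧dx^j − 2iπ Σ_{k,j} ∂_k ε_j dx^k∧dw^j`. -/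
noncomputable def curvF {n : ℕ} (ε A : Fin n → (Fin n → ℝ) → ℝ) (x : Fin n → ℝ)
    (u u' v v' : Fin n → ℝ) : ℂ :=
  (∑ l, ∑ j, Complex.I * ((fderiv ℝ (A j) x (Pi.single l 1) : ℝ) : ℂ) *
      (((u l * v j - v l * u j : ℝ) : ℂ))) +
  ∑ m, ∑ j, (-(2 * (π : ℂ) * Complex.I)) * ((fderiv ℝ (ε j) x (Pi.single m 1) : ℝ) : ℂ) *
      (((u m * v' j - v m * u' j : ℝ) : ℂ))

/-- Auxiliary bilinear sum `Σ_{m,j} ∂_m ε_j · p^m q^j` (as a complex number). -/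
noncomputable def bsum {n : ℕ} (ε : Fin n → (Fin n → ℝ) → ℝ) (x : Fin n → ℝ)
    (p q : Fin n → ℝ) : ℂ :=
  ∑ m, ∑ j, ((fderiv ℝ (ε j) x (Pi.single m 1) : ℝ) : ℂ) * ((p m : ℝ) : ℂ) * ((q j : ℝ) : ℂ)

lemma bsum_symm {n : ℕ} (ε : Fin n → (Fin n → ℝ) → ℝ) (x : Fin n → ℝ)
    (hεsym : ∀ j m (y : Fin n → ℝ),
      fderiv ℝ (ε j) y (Pi.single m 1) = fderiv ℝ (ε m) y (Pi.single j 1))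
    (p q : Fin n → ℝ) : bsum ε x p q = bsum ε x q p := by
  unfold bsum
  rw [Finset.sum_comm]
  refine Finset.sum_congr rfl fun m _ => Finset.sum_congr rfl fun j _ => ?_
  rw [hεsym m j x]
  ring

lemma bsum_neg_left {n : ℕ} (ε : Fin n → (Fin n → ℝ) → ℝ) (x : Fin n → ℝ)
    (p q : Fin n → ℝ) : bsum ε x (-p) q = - bsum ε x p q := by
  unfold bsum
  rw [← Finset.sum_neg_distrib]
  refine Finset.sum_congr rfl fun m _ => ?_
  rw [← Finset.sum_neg_distrib]
  refine Finset.sum_congr rfl fun j _ => ?_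
  simp [Pi.neg_apply]

lemma bsum_neg_right {n : ℕ} (ε : Fin n → (Fin n → ℝ) → ℝ) (x : Fin n → ℝ)
    (p q : Fin n → ℝ) : bsum ε x p (-q) = - bsum ε x p q := by
  unfold bsum
  rw [← Finset.sum_neg_distrib]
  refine Finset.sum_congr rfl fun m _ => ?_
  rw [← Finset.sum_neg_distrib]
  refine Finset.sum_congr rfl fun j _ => ?_
  simp [Pi.neg_apply]

/-- for a Lagrangian section `y_j = ε_j(x)` (symmetric Jacobian) carrying a flat
connection `i Σ A_j dx^j` (symmetric `∂A`), the curvature `F̂ = dÂ` of the transformed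
connection `Â = i Σ A_j dx^j − 2iπ Σ ε_j dw^j` has vanishing `(2,0)` and `(0,2)` Hodge
components, and `F̂ = π Σ_{k,j} (∂ε_k/∂x^j) dz^k∧dz̄^j`. -/
theorem stmt_13 (n : ℕ) (ε A : Fin n → (Fin n → ℝ) → ℝ) (x : Fin n → ℝ)
    (hεs : ∀ j, ContDiff ℝ (⊤ : ℕ∞) (ε j)) (hAs : ∀ j, ContDiff ℝ (⊤ : ℕ∞) (A j))
    (hεsym : ∀ j m (y : Fin n → ℝ),
      fderiv ℝ (ε j) y (Pi.single m 1) = fderiv ℝ (ε m) y (Pi.single j 1))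
    (hAsym : ∀ j l (y : Fin n → ℝ),
      fderiv ℝ (A j) y (Pi.single l 1) = fderiv ℝ (A l) y (Pi.single j 1)) :
    ∀ u u' v v' : Fin n → ℝ,
      hodge20 (curvF ε A x) u u' v v' = 0 ∧
      hodge02 (curvF ε A x) u u' v v' = 0 ∧
      curvF ε A x u u' v v' =
        (π : ℂ) * ∑ m, ∑ j, ((fderiv ℝ (ε m) x (Pi.single j 1) : ℝ) : ℂ) *
          (((u m : ℝ) + Complex.I * ((u' m : ℝ) : ℂ)) * (((v j : ℝ) : ℂ) - Complex.I * ((v' j : ℝ) : ℂ)) -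
           (((v m : ℝ) : ℂ) + Complex.I * ((v' m : ℝ) : ℂ)) * (((u j : ℝ) : ℂ) - Complex.I * ((u' j : ℝ) : ℂ))) := by
  intro u u' v v'
  -- the A-part of the curvature always vanishes
  have hA0 : ∀ p q : Fin n → ℝ,
      (∑ l, ∑ j, Complex.I * ((fderiv ℝ (A j) x (Pi.single l 1) : ℝ) : ℂ) *
        (((p l * q j - q l * p j : ℝ) : ℂ))) = 0 := by
    intro p q
    have h2 : (∑ l, ∑ j, Complex.I * ((fderiv ℝ (A j) x (Pi.single l 1) : ℝ) : ℂ) *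
        (((p l * q j - q l * p j : ℝ) : ℂ)))
        = -(∑ l, ∑ j, Complex.I * ((fderiv ℝ (A j) x (Pi.single l 1) : ℝ) : ℂ) *
        (((p l * q j - q l * p j : ℝ) : ℂ))) := by
      conv_lhs => rw [Finset.sum_comm]
      rw [← Finset.sum_neg_distrib]
      refine Finset.sum_congr rfl fun l _ => ?_
      rw [← Finset.sum_neg_distrib]
      refine Finset.sum_congr rfl fun j _ => ?_
      rw [hAsym l j x]
      push_cast
      ring
    linear_combination h2 / 2
  -- the curvature reduces to the ε-part, expressed through `bsum`
  have hC : ∀ p p' q q' : Fin n → ℝ,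
      curvF ε A x p p' q q' =
        -(2 * (π : ℂ) * Complex.I) * (bsum ε x p q' - bsum ε x q p') := by
    intro p p' q q'
    unfold curvF
    rw [hA0 p q, zero_add]
    unfold bsum
    rw [mul_sub, Finset.mul_sum, Finset.mul_sum, ← Finset.sum_sub_distrib]
    refine Finset.sum_congr rfl fun m _ => ?_
    rw [Finset.mul_sum, Finset.mul_sum, ← Finset.sum_sub_distrib]
    refine Finset.sum_congr rfl fun j _ => ?_
    push_cast
    ring
  have hS := bsum_symm ε x hεsym
  have h1 : bsum ε x u' v = bsum ε x v u' := hS u' v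
  have h2 : bsum ε x v' u = bsum ε x u v' := hS v' u
  have h3 : bsum ε x u' v' = bsum ε x v' u' := hS u' v'
  have h4 : bsum ε x v u = bsum ε x u v := hS v u
  refine ⟨?_, ?_, ?_⟩
  · unfold hodge20
    rw [hC, hC, hC, hC, bsum_neg_left, bsum_neg_left, bsum_neg_left, bsum_neg_left]
    simp only [h1, h2, h3, h4]
    ring
  · unfold hodge02
    rw [hC, hC, hC, hC, bsum_neg_left, bsum_neg_left, bsum_neg_left, bsum_neg_left]
    simp only [h1, h2, h3, h4]
    ring
  · rw [hC u u' v v']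
    have hR : (∑ m, ∑ j, ((fderiv ℝ (ε m) x (Pi.single j 1) : ℝ) : ℂ) *
          (((u m : ℝ) + Complex.I * ((u' m : ℝ) : ℂ)) * (((v j : ℝ) : ℂ) - Complex.I * ((v' j : ℝ) : ℂ)) -
           (((v m : ℝ) : ℂ) + Complex.I * ((v' m : ℝ) : ℂ)) * (((u j : ℝ) : ℂ) - Complex.I * ((u' j : ℝ) : ℂ))))
        = bsum ε x u v - Complex.I * bsum ε x u v' + Complex.I * bsum ε x u' v
          + bsum ε x u' v' - bsum ε x v u + Complex.I * bsum ε x v u'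
          - Complex.I * bsum ε x v' u - bsum ε x v' u' := by
      unfold bsum
      simp only [Finset.mul_sum, ← Finset.sum_sub_distrib, ← Finset.sum_add_distrib]
      refine Finset.sum_congr rfl fun m _ => Finset.sum_congr rfl fun j _ => ?_
      rw [hεsym m j x]
      linear_combination (((fderiv ℝ (ε j) x (Pi.single m 1) : ℝ) : ℂ) *
        (((v' m : ℝ) : ℂ) * ((u' j : ℝ) : ℂ) - ((u' m : ℝ) : ℂ) * ((v' j : ℝ) : ℂ))) * Complex.I_sq
    rw [hR]
    simp only [h1, h2, h3, h4]
    ring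
end
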